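/- If X is a θⁿ-Urysohn topological space and A ⊆ X, then |cl_γⁿ(A)| ≤ |A|^κ ≤ 2^κ where κ = ψ_γⁿ(X) · t_γⁿ(X); in particular |cl_γⁿ(A)| ≤ 2^(ψ_γⁿ(X) t_γⁿ(X)) when |A| ≤ 2^(ψ_γⁿ(X) t_γⁿ(X)). -/

import Mathlib

open Set Topology Cardinal

universe u v

def thetaCl (X : Type u) [TopologicalSpace X] (A : Set X) : Set X :=
  {x | ∀ U : Set X, IsOpen U → x ∈ U → (closure U ∩ A).Nonempty}

def thetaClN (X : Type u) [TopologicalSpace X] (n : ℕ) (A : Set X) : Set X :=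
  (thetaCl X)^[n] A

def gammaCl (X : Type u) [TopologicalSpace X] (n : ℕ) (A : Set X) : Set X :=
  {x | ∀ U : Set X, IsOpen U → x ∈ U → (thetaClN X n U ∩ A).Nonempty}

def ThetaUrysohn (X : Type u) [TopologicalSpace X] (n : ℕ) : Prop :=
  ∀ x y : X, x ≠ y → ∃ U V : Set X, IsOpen U ∧ IsOpen V ∧ x ∈ U ∧ y ∈ V ∧
    thetaClN X n U ∩ thetaClN X n V = ∅

noncomputable def tGamma (X : Type u) [TopologicalSpace X] (n : ℕ) : Cardinal.{u} :=
  sInf {κ | ∀ (x : X) (A : Set X), x ∈ gammaCl X n A →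
    ∃ B ⊆ A, #B ≤ κ ∧ x ∈ gammaCl X n B}

noncomputable def psiGamma (X : Type u) [TopologicalSpace X] (n : ℕ) : Cardinal.{u} :=
  ⨆ x : X, sInf {κ | ∃ B : Set (Set X), #B ≤ κ ∧ (∀ U ∈ B, IsOpen U ∧ x ∈ U) ∧
    (⋂ U ∈ B, gammaCl X n (thetaClN X n U)) = {x}}

/-! Each point `x` of `cl_γⁿ(A)` is the only point of `⋂_{U ∈ 𝒱} cl_γⁿ(cl_θⁿ(U) ∩ B)`, where `𝒱`
witnesses `ψ_γⁿ` at `x` and `B ⊆ A` witnesses `t_γⁿ` for `x ∈ cl_γⁿ(A)`. So `x` is determined by a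
family of at most `ψ` nonempty subsets of `A` of size at most `t`, and there are at most
`(|A| ^ t) ^ ψ` such families. For the second claim, `(2 ^ κ) ^ κ = 2 ^ κ` when `κ` is infinite;
when `κ` is finite, `A` is finite, and finite sets are `γⁿ`-closed in a `θⁿ`-Urysohn space. -/

def nonemptySubsetsCardLE {α : Type u} (A : Set α) (κ : Cardinal.{u}) : Set (Set α) :=
  {S | S.Nonempty ∧ S ⊆ A ∧ #S ≤ κ}

/- Each such set is the range of a map `κ.out → A`; this is where nonemptiness is needed. -/
theorem mk_nonemptySubsetsCardLE_le {α : Type u} (A : Set α) (κ : Cardinal.{u}) :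
    #(nonemptySubsetsCardLE A κ) ≤ #A ^ κ := by
  have hsub : nonemptySubsetsCardLE A κ ⊆
      range fun f : κ.out → A => range (Subtype.val ∘ f) := by
    rintro S ⟨⟨s, hs⟩, hSA, hSκ⟩
    rw [← mk_out κ, le_def] at hSκ
    obtain ⟨e⟩ := hSκ
    have : Nonempty S := ⟨⟨s, hs⟩⟩
    set g : κ.out → S := Function.invFun e
    refine ⟨fun i => ⟨g i, hSA (g i).2⟩, ?_⟩
    change range (Subtype.val ∘ g) = S
    rw [(Function.invFun_surjective e.injective).range_comp, Subtype.range_coe]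
  calc #(nonemptySubsetsCardLE A κ) ≤ #(κ.out → A) := (mk_le_mk_of_subset hsub).trans mk_range_le
    _ = #A ^ κ := by rw [← power_def, mk_out]

section GammaClosure

variable {X : Type u} [TopologicalSpace X] {n : ℕ}

theorem thetaCl_mono {A B : Set X} (h : A ⊆ B) : thetaCl X A ⊆ thetaCl X B :=
  fun _ hx U hU hxU => (hx U hU hxU).mono (inter_subset_inter_right _ h)

theorem subset_thetaCl (A : Set X) : A ⊆ thetaCl X A :=
  fun x hx _ _ hxU => ⟨x, subset_closure hxU, hx⟩

theorem thetaClN_mono {A B : Set X} (h : A ⊆ B) : thetaClN X n A ⊆ thetaClN X n B := by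
  induction n with
  | zero => exact h
  | succ m ih =>
    simp only [thetaClN, Function.iterate_succ_apply'] at ih ⊢
    exact thetaCl_mono ih

theorem subset_thetaClN (A : Set X) : A ⊆ thetaClN X n A := by
  induction n with
  | zero => exact subset_rfl
  | succ m ih =>
    simp only [thetaClN, Function.iterate_succ_apply'] at ih ⊢
    exact ih.trans (subset_thetaCl _)

theorem gammaCl_mono {A B : Set X} (h : A ⊆ B) : gammaCl X n A ⊆ gammaCl X n B :=
  fun _ hx U hU hxU => (hx U hU hxU).mono (inter_subset_inter_right _ h)

theorem subset_gammaCl (A : Set X) : A ⊆ gammaCl X n A :=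
  fun x hx U _ hxU => ⟨x, subset_thetaClN U hxU, hx⟩

theorem nonempty_of_mem_gammaCl {A : Set X} {x : X} (hx : x ∈ gammaCl X n A) : A.Nonempty :=
  (hx univ isOpen_univ trivial).right

theorem mem_gammaCl_thetaClN_inter {U B : Set X} {x : X} (hU : IsOpen U) (hxU : x ∈ U)
    (hx : x ∈ gammaCl X n B) : x ∈ gammaCl X n (thetaClN X n U ∩ B) := by
  intro W hW hxW
  obtain ⟨b, hbWU, hbB⟩ := hx (W ∩ U) (hW.inter hU) ⟨hxW, hxU⟩
  exact ⟨b, thetaClN_mono inter_subset_left hbWU, thetaClN_mono inter_subset_right hbWU, hbB⟩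

theorem exists_subset_mk_le_tGamma {A : Set X} {x : X} (hx : x ∈ gammaCl X n A) :
    ∃ B ⊆ A, #B ≤ tGamma X n ∧ x ∈ gammaCl X n B :=
  csInf_mem (s := {κ | ∀ (x : X) (A : Set X), x ∈ gammaCl X n A →
      ∃ B ⊆ A, #B ≤ κ ∧ x ∈ gammaCl X n B})
    ⟨#X, fun _ A hx => ⟨A, subset_rfl, mk_set_le A, hx⟩⟩ x A hx

end GammaClosure

namespace ThetaUrysohn

variable {X : Type u} [TopologicalSpace X] {n : ℕ}

theorem exists_isOpen_not_mem_gammaCl (hX : ThetaUrysohn X n) {x y : X} (h : x ≠ y) :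
    ∃ U, IsOpen U ∧ x ∈ U ∧ y ∉ gammaCl X n (thetaClN X n U) := by
  obtain ⟨U, V, hU, hV, hxU, hyV, hUV⟩ := hX x y h
  refine ⟨U, hU, hxU, fun hy => ?_⟩
  obtain ⟨z, hzV, hzU⟩ := hy V hV hyV
  exact (eq_empty_iff_forall_notMem.1 hUV) z ⟨hzU, hzV⟩

theorem exists_family_mk_le_psiGamma (hX : ThetaUrysohn X n) (x : X) :
    ∃ B : Set (Set X), #B ≤ psiGamma X n ∧ (∀ U ∈ B, IsOpen U ∧ x ∈ U) ∧
      (⋂ U ∈ B, gammaCl X n (thetaClN X n U)) = {x} := by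
  have hne : {κ | ∃ B : Set (Set X), #B ≤ κ ∧ (∀ U ∈ B, IsOpen U ∧ x ∈ U) ∧
      (⋂ U ∈ B, gammaCl X n (thetaClN X n U)) = {x}}.Nonempty := by
    refine ⟨_, {U | IsOpen U ∧ x ∈ U}, le_rfl, fun U hU => hU, ?_⟩
    refine eq_singleton_iff_unique_mem.2
      ⟨mem_biInter fun U hU => subset_gammaCl _ (subset_thetaClN U hU.2), fun y hy => ?_⟩
    by_contra hyx
    obtain ⟨U, hU, hxU, hyU⟩ := hX.exists_isOpen_not_mem_gammaCl (Ne.symm hyx)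
    exact hyU (mem_iInter₂.1 hy U ⟨hU, hxU⟩)
  obtain ⟨B, hB, hBx⟩ := csInf_mem hne
  exact ⟨B, hB.trans (le_ciSup bddAbove_of_small x), hBx⟩

theorem gammaCl_eq_self_of_finite (hX : ThetaUrysohn X n) {A : Set X} (hA : A.Finite) :
    gammaCl X n A = A := by
  refine (subset_gammaCl A).antisymm' fun x hx => ?_
  by_contra hxA
  have hsep (a : A) : ∃ U, IsOpen U ∧ x ∈ U ∧ (a : X) ∉ gammaCl X n (thetaClN X n U) :=
    hX.exists_isOpen_not_mem_gammaCl (ne_of_mem_of_not_mem a.2 hxA).symm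
  choose U hU hxU haU using hsep
  have := hA.to_subtype
  obtain ⟨a, haU', ha⟩ := hx (⋂ a, U a) (isOpen_iInter_of_finite hU) (mem_iInter.2 hxU)
  exact haU ⟨a, ha⟩ <| subset_gammaCl _ <| thetaClN_mono (iInter_subset _ _) haU'

/- The family is `{thetaClN U ∩ B | U ∈ V}` for `V` a `psiGamma`-witness at `x` and `B` a
`tGamma`-witness for `x ∈ gammaCl X n A`. -/
theorem exists_family_nonemptySubsetsCardLE [Nontrivial X] (hX : ThetaUrysohn X n)
    {A : Set X} {x : X} (hx : x ∈ gammaCl X n A) :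
    ∃ Φ ∈ nonemptySubsetsCardLE (nonemptySubsetsCardLE A (tGamma X n)) (psiGamma X n),
      (⋂ S ∈ Φ, gammaCl X n S) = {x} := by
  obtain ⟨B, hBA, hBt, hxB⟩ := exists_subset_mk_le_tGamma hx
  obtain ⟨V, hVψ, hVx, hV⟩ := hX.exists_family_mk_le_psiGamma x
  have hVne : V.Nonempty := by
    rw [nonempty_iff_ne_empty]
    rintro rfl
    obtain ⟨y, hy⟩ := exists_ne x
    simp only [mem_empty_iff_false, iInter_of_empty, iInter_univ] at hV
    exact hy (eq_singleton_iff_unique_mem.1 hV |>.2 y trivial)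
  refine ⟨(fun U => thetaClN X n U ∩ B) '' V,
    ⟨hVne.image _, ?_, mk_image_le.trans hVψ⟩, ?_⟩
  · rintro _ ⟨U, hU, rfl⟩
    exact ⟨hxB U (hVx U hU).1 (hVx U hU).2, inter_subset_right.trans hBA,
      (mk_le_mk_of_subset inter_subset_right).trans hBt⟩
  · refine eq_singleton_iff_unique_mem.2 ⟨?_, fun y hy => ?_⟩
    · refine mem_biInter <| forall_mem_image.2 fun U hU => ?_
      exact mem_gammaCl_thetaClN_inter (hVx U hU).1 (hVx U hU).2 hxB
    · rw [← mem_singleton_iff, ← hV]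
      exact mem_biInter fun U hU =>
        gammaCl_mono inter_subset_left (mem_iInter₂.1 hy _ (mem_image_of_mem _ hU))

theorem mk_gammaCl_le_power [Nontrivial X] (hX : ThetaUrysohn X n) (A : Set X) :
    #(gammaCl X n A) ≤ #A ^ (psiGamma X n * tGamma X n) := by
  choose Φ hΦ hΦx using fun x : gammaCl X n A => hX.exists_family_nonemptySubsetsCardLE x.2
  have hinj : Function.Injective fun x => (⟨Φ x, hΦ x⟩ : nonemptySubsetsCardLE _ _) := by
    intro x y hxy
    have hΦxy : Φ x = Φ y := congrArg Subtype.val hxy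
    exact Subtype.ext <| singleton_eq_singleton_iff.1 <| by rw [← hΦx, ← hΦx, hΦxy]
  calc #(gammaCl X n A) ≤ #(nonemptySubsetsCardLE (nonemptySubsetsCardLE A (tGamma X n))
          (psiGamma X n)) := mk_le_of_injective hinj
    _ ≤ (#A ^ tGamma X n) ^ psiGamma X n := (mk_nonemptySubsetsCardLE_le _ _).trans <|
        power_le_power_right (mk_nonemptySubsetsCardLE_le _ _)
    _ = #A ^ (psiGamma X n * tGamma X n) := by rw [← power_mul, mul_comm]

end ThetaUrysohn

theorem mk_gammaCl_le_power_of_subsingleton {X : Type u} [TopologicalSpace X] [Subsingleton X]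
    (n : ℕ) (A : Set X) (κ : Cardinal.{u}) : #(gammaCl X n A) ≤ #A ^ κ := by
  rcases (gammaCl X n A).eq_empty_or_nonempty with h | ⟨x, hx⟩
  · simp [h]
  · calc #(gammaCl X n A) ≤ 1 := mk_le_one_iff_set_subsingleton.2 subsingleton_of_subsingleton
      _ ≤ #A ^ κ := Cardinal.one_le_iff_ne_zero.2 <|
        power_ne_zero _ (mk_ne_zero_iff.2 (nonempty_of_mem_gammaCl hx).to_subtype)

theorem card_gammaCl_le (X : Type u) [TopologicalSpace X] (n : ℕ)
    (hX : ThetaUrysohn X n) (A : Set X) :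
    #(gammaCl X n A) ≤ #A ^ (psiGamma X n * tGamma X n) ∧
      (#A ≤ 2 ^ (psiGamma X n * tGamma X n) →
        #(gammaCl X n A) ≤ 2 ^ (psiGamma X n * tGamma X n)) := by
  set κ := psiGamma X n * tGamma X n
  have hpow : #(gammaCl X n A) ≤ #A ^ κ := by
    rcases subsingleton_or_nontrivial X with _ | _
    · exact mk_gammaCl_le_power_of_subsingleton n A κ
    · exact hX.mk_gammaCl_le_power A
  refine ⟨hpow, fun hA => ?_⟩
  rcases lt_or_ge κ ℵ₀ with hκ | hκ
  · have hAfin : A.Finite := lt_aleph0_iff_set_finite.1 <|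
      hA.trans_lt (power_lt_aleph0 (natCast_lt_aleph0 (n := 2)) hκ)
    rwa [hX.gammaCl_eq_self_of_finite hAfin]
  · calc #(gammaCl X n A) ≤ (2 ^ κ) ^ κ := hpow.trans (power_le_power_right hA)
      _ = 2 ^ κ := by rw [← power_mul, mul_eq_self hκ]
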